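/- Let N ∈ ℕ, let G, H_i, H_j be positive definite real N×N matrices, let p̃_i, p̃_j > 0 and α > 0 be reals, and assume that M := G⁻¹ + α·H_j⁻¹ − α·H_i⁻¹ is positive definite. Then ∫_{ℝ^N} g_G(y) · ( (p̃_j · g_{H_j}(y)) / (p̃_i · g_{H_i}(y)) )^α dy = (p̃_j/p̃_i)^α · (det H_i / det H_j)^{α/2} · (det G · det M)^{−1/2}. -/

import Mathlib

/-!
Each Gaussian density is the exponential of a constant minus half a quadratic form, so after taking
logarithms the integrand is `exp c · exp (-(1/2) yᵀ M y)` for an explicit constant `c`. Writing the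
positive definite `M` as `Bᵀ B` and substituting `x = B y` reduces `∫ exp (-(1/2) yᵀ M y)` to a
product of one-dimensional Gaussian integrals, which gives `(2π)^{N/2} (det M)^{-1/2}`.
-/

open MeasureTheory Matrix

/-- The centered Gaussian density on `ℝ^N` with covariance matrix `G`:
`g_G(y) = (2π)^{-N/2} (det G)^{-1/2} exp(-(1/2) yᵀ G⁻¹ y)`. -/
noncomputable def gaussDensity {N : ℕ} (G : Matrix (Fin N) (Fin N) ℝ)
    (y : Fin N → ℝ) : ℝ :=
  (2 * Real.pi) ^ (-(N : ℝ) / 2) * G.det ^ (-(1 : ℝ) / 2) *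
    Real.exp (-(1 / 2) * (y ⬝ᵥ G⁻¹ *ᵥ y))

open Real

section GaussianIntegral

variable {ι : Type*} [Fintype ι]

theorem integral_exp_neg_half_dotProduct_self :
    ∫ x : ι → ℝ, exp (-(1 / 2) * (x ⬝ᵥ x)) = (2 * π) ^ ((Fintype.card ι : ℝ) / 2) := by
  have h := integral_fintype_prod_eq_pow (ι := ι) (μ := volume) fun t : ℝ => exp (-(1 / 2) * t ^ 2)
  simp only [← exp_sum, ← Finset.mul_sum, integral_gaussian] at h
  simp only [dotProduct, ← sq]
  rw [volume_pi, h, sqrt_eq_rpow, ← rpow_natCast, ← rpow_mul (by positivity)]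
  congr 1 <;> ring

variable [DecidableEq ι]

theorem integral_comp_mulVec {E : Type*} [NormedAddCommGroup E] [NormedSpace ℝ E]
    {A : Matrix ι ι ℝ} (hA : A.det ≠ 0) (f : (ι → ℝ) → E) :
    ∫ y, f (A *ᵥ y) = |A.det|⁻¹ • ∫ x, f x := by
  have hinj : LinearMap.ker (toLin' A) = ⊥ :=
    LinearMap.ker_eq_bot.mpr <| mulVec_injective_iff_isUnit.mpr <|
      (isUnit_iff_isUnit_det A).mpr hA.isUnit
  have hemb : MeasurableEmbedding (toLin' A) :=
    (LinearMap.isClosedEmbedding_of_injective hinj).measurableEmbedding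
  change ∫ y, f (toLin' A y) = _
  rw [← hemb.integral_map, Real.map_matrix_volume_pi_eq_smul_volume_pi hA, integral_smul_measure,
    ENNReal.toReal_ofReal (abs_nonneg _), abs_inv]

open scoped MatrixOrder in
theorem integral_exp_neg_half_dotProduct_mulVec {M : Matrix ι ι ℝ} (hM : M.PosDef) :
    ∫ y : ι → ℝ, exp (-(1 / 2) * (y ⬝ᵥ M *ᵥ y)) =
      (2 * π) ^ ((Fintype.card ι : ℝ) / 2) * M.det ^ (-(1 : ℝ) / 2) := by
  obtain ⟨B, hB, rfl⟩ :=
    CStarAlgebra.isStrictlyPositive_iff_eq_star_mul_self.mp hM.isStrictlyPositive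
  have hquad (y : ι → ℝ) : y ⬝ᵥ (star B * B) *ᵥ y = B *ᵥ y ⬝ᵥ B *ᵥ y := by
    rw [← mulVec_mulVec, dotProduct_mulVec, star_eq_conjTranspose, vecMul_conjTranspose,
      star_trivial, star_trivial]
  have hdet : (star B * B).det = |B.det| ^ (2 : ℝ) := by
    rw [det_mul, star_eq_conjTranspose, det_conjTranspose, star_trivial, rpow_two, sq_abs, sq]
  simp only [hquad]
  rw [integral_comp_mulVec ((isUnit_iff_isUnit_det B).mp hB).ne_zero
      (fun x => exp (-(1 / 2) * (x ⬝ᵥ x))),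
    integral_exp_neg_half_dotProduct_self, hdet, smul_eq_mul, ← rpow_mul (abs_nonneg _),
    ← rpow_neg_one]
  norm_num [mul_comm]

end GaussianIntegral

theorem gaussDensity_eq_exp {N : ℕ} {G : Matrix (Fin N) (Fin N) ℝ} (hG : 0 < G.det)
    (y : Fin N → ℝ) :
    gaussDensity G y = exp (-(1 / 2) * (N * log (2 * π) + log G.det + y ⬝ᵥ G⁻¹ *ᵥ y)) := by
  rw [gaussDensity, rpow_def_of_pos (by positivity), rpow_def_of_pos hG, ← exp_add, ← exp_add]
  ring_nf

theorem gaussian_exponential_moment_general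
    (N : ℕ) (G Hi Hj : Matrix (Fin N) (Fin N) ℝ)
    (hG : G.PosDef) (hHi : Hi.PosDef) (hHj : Hj.PosDef)
    (pti ptj α : ℝ) (hpti : 0 < pti) (hptj : 0 < ptj)
    (hM : (G⁻¹ + α • Hj⁻¹ - α • Hi⁻¹).PosDef) :
    ∫ y : Fin N → ℝ,
        gaussDensity G y * ((ptj * gaussDensity Hj y) / (pti * gaussDensity Hi y)) ^ α
      = (ptj / pti) ^ α * (Hi.det / Hj.det) ^ (α / 2) *
          (G.det * (G⁻¹ + α • Hj⁻¹ - α • Hi⁻¹).det) ^ (-(1 : ℝ) / 2) := by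
  set M := G⁻¹ + α • Hj⁻¹ - α • Hi⁻¹
  set c := α * (log ptj - log pti) + α / 2 * (log Hi.det - log Hj.det) - 1 / 2 * log G.det
    - N / 2 * log (2 * π)
  have hquad (y : Fin N → ℝ) : y ⬝ᵥ M *ᵥ y =
      y ⬝ᵥ G⁻¹ *ᵥ y + α * (y ⬝ᵥ Hj⁻¹ *ᵥ y) - α * (y ⬝ᵥ Hi⁻¹ *ᵥ y) := by
    simp only [M, sub_mulVec, add_mulVec, smul_mulVec, dotProduct_add, dotProduct_sub,
      dotProduct_smul, smul_eq_mul]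
  have hintegrand (y : Fin N → ℝ) :
      gaussDensity G y * ((ptj * gaussDensity Hj y) / (pti * gaussDensity Hi y)) ^ α
        = exp c * exp (-(1 / 2) * (y ⬝ᵥ M *ᵥ y)) := by
    rw [gaussDensity_eq_exp hG.det_pos, gaussDensity_eq_exp hHi.det_pos,
      gaussDensity_eq_exp hHj.det_pos, ← exp_log hpti, ← exp_log hptj, ← exp_add, ← exp_add,
      ← exp_sub, ← exp_mul, ← exp_add, ← exp_add, hquad]
    congr 1
    ring
  simp only [hintegrand]
  rw [integral_const_mul, integral_exp_neg_half_dotProduct_mulVec hM, Fintype.card_fin,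
    rpow_def_of_pos (by positivity : 0 < 2 * π), rpow_def_of_pos hM.det_pos,
    rpow_def_of_pos (div_pos hptj hpti), rpow_def_of_pos (div_pos hHi.det_pos hHj.det_pos),
    rpow_def_of_pos (mul_pos hG.det_pos hM.det_pos), log_div hptj.ne' hpti.ne',
    log_div hHi.det_pos.ne' hHj.det_pos.ne', log_mul hG.det_pos.ne' hM.det_pos.ne']
  simp only [← exp_add]
  congr 1
  ring

/-- The Gaussian integral evaluation underlying Theorem 1 of the paper: the exponential-moment
bound on the two-class misclassification probability equals this closed form. -/
theorem gaussian_exponential_moment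
    (N : ℕ) (G Hi Hj : Matrix (Fin N) (Fin N) ℝ)
    (hG : G.PosDef) (hHi : Hi.PosDef) (hHj : Hj.PosDef)
    (pti ptj α : ℝ) (hpti : 0 < pti) (hptj : 0 < ptj) (hα : 0 < α)
    (hM : (G⁻¹ + α • Hj⁻¹ - α • Hi⁻¹).PosDef) :
    ∫ y : Fin N → ℝ,
        gaussDensity G y * ((ptj * gaussDensity Hj y) / (pti * gaussDensity Hi y)) ^ α
      = (ptj / pti) ^ α * (Hi.det / Hj.det) ^ (α / 2) *
          (G.det * (G⁻¹ + α • Hj⁻¹ - α • Hi⁻¹).det) ^ (-(1 : ℝ) / 2) :=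
  gaussian_exponential_moment_general N G Hi Hj hG hHi hHj pti ptj α hpti hptj hM
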